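/- arXiv:1804.09494 — 6 statements merged into one kernel-verified Lean document; each statement's English description precedes it below -/
import Mathlib

section
/- Under the round-robin assignment of slices sorted in increasing order of cardinality, at the beginning of any iteration t, the processor p_t = t mod P scheduled to receive the next slice has the minimum current load among all processors. -/
/-- Under round-robin assignment of slices sorted in increasing order of
cardinality (slice `t` of size `s t` goes to processor `t % P`; `h t p` is the load of
processor `p` at the beginning of iteration `t`), at the beginning of any iteration `t`,
the processor `p_t = t % P` scheduled to receive the next slice has the minimum current
load among all processors. -/
theorem stmt1 (P : ℕ) (hP : 0 < P) (s : ℕ → ℕ) (hmono : Monotone s)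
    (h : ℕ → ℕ → ℕ)
    (hinit : ∀ p, h 0 p = 0)
    (hstep : ∀ t p, h (t + 1) p = h t p + (if p = t % P then s t else 0)) :
    ∀ t, ∀ p < P, h t (t % P) ≤ h t p := by
  -- closed form for the load
  have hg : ∀ t p, h t p = ∑ i ∈ Finset.range t, if i % P = p then s i else 0 := by
    intro t
    induction t with
    | zero => intro p; simp [hinit]
    | succ n ih =>
      intro p
      rw [Finset.sum_range_succ, hstep, ih]
      congr 1
      by_cases hc : p = n % P
      · simp [hc]
      · simp [hc, Ne.symm hc]
  -- reindexing lemma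
  have key : ∀ q r p, r ≤ P → p < P →
      (∑ i ∈ Finset.range (q * P + r), if i % P = p then s i else 0)
        = ∑ j ∈ Finset.range (if p < r then q + 1 else q), s (j * P + p) := by
    intro q
    induction q with
    | zero =>
      intro r p hr hp
      simp only [Nat.zero_mul, Nat.zero_add]
      have : (∑ i ∈ Finset.range r, if i % P = p then s i else 0)
          = ∑ i ∈ Finset.range r, if i = p then s i else 0 := by
        refine Finset.sum_congr rfl ?_
        intro i hi
        rw [Nat.mod_eq_of_lt (lt_of_lt_of_le (Finset.mem_range.mp hi) hr)]
      rw [this, Finset.sum_ite_eq' (Finset.range r) p s]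
      by_cases hpr : p < r
      · simp [hpr]
      · simp [hpr, Finset.mem_range]
    | succ q ih =>
      intro r p hr hp
      have hsplit : (q + 1) * P + r = (q * P + r) + P := by ring
      rw [hsplit, Finset.sum_range_add, ih r p hr hp]
      set i0 : ℕ := if p < r then P + p - r else p - r with hi0
      have hterm : (∑ i ∈ Finset.range P,
            if (q * P + r + i) % P = p then s (q * P + r + i) else 0)
          = s (q * P + r + i0) := by
        have : (∑ i ∈ Finset.range P,
              if (q * P + r + i) % P = p then s (q * P + r + i) else 0)
            = ∑ i ∈ Finset.range P, if i = i0 then s (q * P + r + i) else 0 := by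
          refine Finset.sum_congr rfl ?_
          intro i hi
          have hiP : i < P := Finset.mem_range.mp hi
          have hmod : (q * P + r + i) % P = (r + i) % P := by
            rw [Nat.add_assoc, Nat.mul_comm q P, Nat.mul_add_mod]
          have hmodval : (r + i) % P = if r + i < P then r + i else r + i - P := by
            rcases Nat.lt_or_ge (r + i) P with hc | hc
            · rw [if_pos hc, Nat.mod_eq_of_lt hc]
            · rw [if_neg (not_lt.mpr hc), Nat.mod_eq_sub_mod hc,
                Nat.mod_eq_of_lt (by omega)]
          congr 1
          rw [hmod]
          simp only [eq_iff_iff]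
          rw [hmodval, hi0]
          split_ifs <;> omega
        rw [this, Finset.sum_ite_eq' (Finset.range P) i0 (fun i => s (q * P + r + i))]
        have : i0 < P := by
          by_cases hpr : p < r <;> simp [hi0, hpr] <;> omega
        simp [this, Finset.mem_range]
      rw [hterm]
      by_cases hpr : p < r
      · have h1 : i0 = P + p - r := by simp [hi0, hpr]
        have h2 : q * P + r + i0 = (q + 1) * P + p := by rw [h1]; ring_nf; omega
        simp only [hpr, if_true]
        rw [h2]
        conv_rhs => rw [Finset.sum_range_succ]
      · have h1 : i0 = p - r := by simp [hi0, hpr]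
        have h2 : q * P + r + i0 = q * P + p := by rw [h1]; omega
        simp only [hpr, if_false]
        rw [h2]
        conv_rhs => rw [Finset.sum_range_succ]
  intro t p hp
  rw [hg, hg]
  have hr : t % P < P := Nat.mod_lt _ hP
  have ht : t = (t / P) * P + t % P := by
    conv_lhs => rw [← Nat.div_add_mod t P]
    ring
  set q := t / P
  set r := t % P
  rw [ht, key q r r hr.le hr, key q r p hr.le hp]
  simp only [lt_irrefl, if_false]
  by_cases hpr : p < r
  · simp only [hpr, if_true]
    rw [Finset.sum_range_succ']
    have : (∑ j ∈ Finset.range q, s (j * P + r))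
        ≤ ∑ j ∈ Finset.range q, s ((j + 1) * P + p) := by
      refine Finset.sum_le_sum ?_
      intro j _
      apply hmono
      have : (j + 1) * P = j * P + P := by ring
      omega
    exact this.trans (Nat.le_add_right _ _)
  · simp only [hpr, if_false]
    refine Finset.sum_le_sum ?_
    intro j _
    apply hmono
    omega
end

section
/- Under round-robin assignment of sorted slices, in any iteration t the loads of the processors, read cyclically starting from p_t = t mod P, are in non-decreasing order, and the difference between the largest and smallest load is at most |S_t|. -/
/-!
The two claims together are an invariant of one iteration, proved by induction on `t`.
Cyclic monotonicity from `p_t` makes `p_t` a least-loaded processor. After `p_t` receives `S_t`,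
claim (b) says it has caught up with `p_t ⊖ 1`, so the loads read from `p_{t+1}` are still
non-decreasing; and the new gap `h(p_t) + |S_t| - h(p_{t+1})` is at most `|S_t| ≤ |S_{t+1}|`
by minimality of `h(p_t)`.
-/

theorem Nat.add_mod_ne_self {P q j : ℕ} (hq : q < P) (hj : 0 < j) (hjP : j < P) :
    (q + j) % P ≠ q := by
  rcases Nat.lt_or_ge (q + j) P with hlt | hge
  · rw [Nat.mod_eq_of_lt hlt]; omega
  · rw [Nat.mod_eq_sub_mod hge, Nat.mod_eq_of_lt (by omega)]; omega

namespace RoundRobin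

def cycPred (P p : ℕ) : ℕ := (p + P - 1) % P

def CyclicMonotoneFrom (P q : ℕ) (f : ℕ → ℕ) : Prop :=
  ∀ p < P, p ≠ q → f (cycPred P p) ≤ f p

variable {P : ℕ}

theorem cycPred_succ_mod (hP : 0 < P) (m : ℕ) : cycPred P ((m + 1) % P) = m % P := by
  unfold cycPred
  rw [show (m + 1) % P + P - 1 = (m + 1) % P + (P - 1) by omega, Nat.mod_add_mod,
    show m + 1 + (P - 1) = m + P by omega, Nat.add_mod_right]

theorem succ_cycPred_mod {p : ℕ} (hp : p < P) : (cycPred P p + 1) % P = p := by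
  unfold cycPred
  rw [Nat.mod_add_mod, show p + P - 1 + 1 = p + P by omega, Nat.add_mod_right,
    Nat.mod_eq_of_lt hp]

theorem cycPred_injOn {p p' : ℕ} (hp : p < P) (hp' : p' < P)
    (h : cycPred P p = cycPred P p') : p = p' := by
  rw [← succ_cycPred_mod hp, ← succ_cycPred_mod hp', h]

theorem CyclicMonotoneFrom.le {q : ℕ} {f : ℕ → ℕ} (hf : CyclicMonotoneFrom P q f) (hq : q < P)
    {p : ℕ} (hp : p < P) : f q ≤ f p := by
  have hP : 0 < P := by omega
  have walk : ∀ k < P, f q ≤ f ((q + k) % P) := by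
    intro k
    induction k with
    | zero => simp [Nat.mod_eq_of_lt hq]
    | succ k ih =>
      intro hk
      have hpred : cycPred P ((q + k + 1) % P) = (q + k) % P := cycPred_succ_mod hP (q + k)
      calc f q ≤ f ((q + k) % P) := ih (by omega)
        _ ≤ f ((q + (k + 1)) % P) := by
          rw [← hpred]
          exact hf _ (Nat.mod_lt _ hP) (Nat.add_mod_ne_self hq (by omega) hk)
  have hround : (q + (p + P - q) % P) % P = p := by
    rw [Nat.add_mod_mod, show q + (p + P - q) = p + P by omega, Nat.add_mod_right,
      Nat.mod_eq_of_lt hp]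
  exact hround ▸ walk ((p + P - q) % P) (Nat.mod_lt _ hP)

section Step

variable {m c : ℕ} {f g : ℕ → ℕ}

theorem CyclicMonotoneFrom.succ (hP : 0 < P) (hf : CyclicMonotoneFrom P (m % P) f)
    (hc : f (cycPred P (m % P)) - f (m % P) ≤ c)
    (hg : ∀ p, g p = f p + if p = m % P then c else 0) :
    CyclicMonotoneFrom P ((m + 1) % P) g := by
  intro p hp hpm
  by_cases hpq : p = m % P
  · subst hpq
    by_cases hpred : cycPred P (m % P) = m % P
    · rw [hpred]
    · rw [hg, hg, if_neg hpred, if_pos rfl]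
      omega
  · have hpred : cycPred P p ≠ m % P := by
      rw [← cycPred_succ_mod hP m]
      exact fun h => hpm (cycPred_injOn hp (Nat.mod_lt _ hP) h)
    rw [hg, hg, if_neg hpred, if_neg hpq]
    exact hf p hp hpq

theorem CyclicMonotoneFrom.cycPred_succ_sub_le (hP : 0 < P) (hf : CyclicMonotoneFrom P (m % P) f)
    (hg : ∀ p, g p = f p + if p = m % P then c else 0) :
    g (cycPred P ((m + 1) % P)) - g ((m + 1) % P) ≤ c := by
  have hmin : f (m % P) ≤ f ((m + 1) % P) := hf.le (Nat.mod_lt _ hP) (Nat.mod_lt _ hP)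
  have hle : f ((m + 1) % P) ≤ g ((m + 1) % P) := by rw [hg]; omega
  rw [cycPred_succ_mod hP, hg, if_pos rfl]
  omega

end Step

end RoundRobin

/-- Under round-robin assignment of sorted slices, in any iteration `t` the
loads of the processors, read cyclically starting from `p_t = t % P`, are in
non-decreasing order, and the difference between the largest load (at `p_t ⊖ 1`) and the
smallest load (at `p_t`) is at most `s t`. -/
theorem stmt2 (P : ℕ) (hP : 0 < P) (s : ℕ → ℕ) (hmono : Monotone s)
    (h : ℕ → ℕ → ℕ)
    (hinit : ∀ p, h 0 p = 0)
    (hstep : ∀ t p, h (t + 1) p = h t p + (if p = t % P then s t else 0)) :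
    ∀ t,
      (∀ p < P, p ≠ t % P → h t ((p + P - 1) % P) ≤ h t p) ∧
      h t ((t % P + P - 1) % P) - h t (t % P) ≤ s t := by
  intro t
  induction t with
  | zero => simp [hinit]
  | succ t ih =>
    obtain ⟨hmon, hgap⟩ := ih
    exact ⟨RoundRobin.CyclicMonotoneFrom.succ hP hmon hgap (hstep t),
      (RoundRobin.CyclicMonotoneFrom.cycPred_succ_sub_le hP hmon (hstep t)).trans (hmono t.le_succ)⟩
end

section
/- If the round-robin first stage exits at iteration t̂ because assigning slice S_{t̂} to processor p̂ = t̂ mod P would exceed the limit B, then every remaining slice S with t ≥ t̂ satisfies |S| > B − h(p) for every processor p, where h(p) is the load of p at the end of the first stage. -/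
/-- If the round-robin first stage exits at iteration `t̂` because assigning
slice `S_{t̂}` to processor `p̂ = t̂ % P` would exceed the limit `B`, then every remaining
slice `S_t` with `t ≥ t̂` satisfies `|S_t| > B − h(p)` for every processor `p`, where
`h(p) = h t̂ p` is the load of `p` at the end of the first stage. -/
theorem stmt3 (P : ℕ) (hP : 0 < P) (s : ℕ → ℕ) (hmono : Monotone s) (B : ℕ)
    (h : ℕ → ℕ → ℕ)
    (hinit : ∀ p, h 0 p = 0)
    (hstep : ∀ t p, h (t + 1) p = h t p + (if p = t % P then s t else 0))
    (that : ℕ)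
    (hfit : ∀ t < that, h t (t % P) + s t ≤ B)
    (hexit : B < h that (that % P) + s that) :
    ∀ t ≥ that, ∀ p < P, B - h that p < s t := by
  intro t ht p hp
  have hform : ∀ n q, h n q = ∑ i ∈ Finset.range n, if q = i % P then s i else 0 := by
    intro n
    induction n with
    | zero => intro q; simp [hinit]
    | succ k ih => intro q; rw [hstep, ih, Finset.sum_range_succ]
  set r := that % P with hrdef
  have hrP : r < P := Nat.mod_lt _ hP
  set d : ℕ := if r ≤ p then p - r else P + p - r with hd
  have hdP : d < P := by rw [hd]; split <;> omega
  -- key: processor r has minimal load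
  have key : h that r ≤ h that p := by
    rw [hform, hform, ← Finset.sum_filter, ← Finset.sum_filter]
    have hmap : ∀ i ∈ (Finset.range that).filter (fun i => r = i % P),
        i + d ∈ (Finset.range that).filter (fun i => p = i % P) := by
      intro i hi
      simp only [Finset.mem_filter, Finset.mem_range] at hi ⊢
      obtain ⟨hilt, himod⟩ := hi
      have hi' := Nat.div_add_mod i P
      have ht' := Nat.div_add_mod that P
      have hiq : P * (i / P) + r = i := by omega
      have hab : i / P < that / P := by
        by_contra hcon
        push_neg at hcon
        have := Nat.mul_le_mul_left P hcon
        omega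
      have hiP : i + P ≤ that := by
        have h1 : P * (i / P + 1) ≤ P * (that / P) := Nat.mul_le_mul_left P hab
        have h2 : P * (i / P + 1) = P * (i / P) + P := by ring
        omega
      refine ⟨by omega, ?_⟩
      by_cases hc : r ≤ p
      · have he : i + d = p + P * (i / P) := by
          have := hiq
          simp only [hd, if_pos hc]
          omega
        rw [he, Nat.add_mul_mod_self_left, Nat.mod_eq_of_lt hp]
      · have he : i + d = p + P * (i / P + 1) := by
          have h2 : P * (i / P + 1) = P * (i / P) + P := by ring
          simp only [hd, if_neg hc]
          omega
        rw [he, Nat.add_mul_mod_self_left, Nat.mod_eq_of_lt hp]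
    calc ∑ i ∈ (Finset.range that).filter (fun i => r = i % P), s i
        ≤ ∑ i ∈ (Finset.range that).filter (fun i => r = i % P), s (i + d) :=
          Finset.sum_le_sum (fun i _ => hmono (Nat.le_add_right i d))
      _ = ∑ j ∈ ((Finset.range that).filter (fun i => r = i % P)).image (· + d), s j :=
          (Finset.sum_image (fun a _ b _ hab => by omega)).symm
      _ ≤ ∑ j ∈ (Finset.range that).filter (fun i => p = i % P), s j := by
          apply Finset.sum_le_sum_of_subset
          intro j hj
          obtain ⟨i, hi, rfl⟩ := Finset.mem_image.mp hj
          exact hmap i hi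
  have hst : s that ≤ s t := hmono ht
  have hbound : ∀ n, n ≤ that → ∀ q, h n q ≤ B := by
    intro n
    induction n with
    | zero => intro _ q; simp [hinit]
    | succ k ih =>
      intro hk q
      rw [hstep]
      by_cases hq : q = k % P
      · rw [if_pos hq, hq]
        exact hfit k (by omega)
      · rw [if_neg hq]
        simpa using ih (by omega) q
  have hBr : h that r ≤ B := hbound that le_rfl r
  omega
end

section
/- In the Lite scheme, the total sharing count Σ_p R^p (where R^p is the number of slices from which processor p receives at least one element) is at most L + P, where L is the number of slices. -/
/-- In the Lite scheme, the total sharing count `Σ_p R^p` is at most `L + P`.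
The `L` slices split into first-stage slices `S1` (each shared by exactly one processor)
and second-stage slices `S2`, each of which has a head processor sharing it, every other
sharing processor being a tail member; each processor participates in the tail of at most
one slice. -/
theorem stmt5 (P L : ℕ) (hP : 0 < P)
    (shares : Fin P → Fin L → Prop) [∀ p l, Decidable (shares p l)]
    (S1 S2 : Finset (Fin L))
    (hpart : S1 ∪ S2 = Finset.univ) (hdisj : Disjoint S1 S2)
    (hgood : ∀ l ∈ S1, (Finset.univ.filter (fun p : Fin P => shares p l)).card = 1)
    (head : Fin L → Fin P)
    (hhead : ∀ l ∈ S2, shares (head l) l)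
    (htail : ∀ p : Fin P,
      (S2.filter (fun l => shares p l ∧ head l ≠ p)).card ≤ 1) :
    ∑ p : Fin P, (Finset.univ.filter (fun l : Fin L => shares p l)).card ≤ L + P := by
  -- swap the double count
  have hswap : ∑ p : Fin P, (Finset.univ.filter (fun l : Fin L => shares p l)).card
      = ∑ l : Fin L, (Finset.univ.filter (fun p : Fin P => shares p l)).card := by
    simp only [Finset.card_filter]
    exact Finset.sum_comm
  rw [hswap, ← hpart, Finset.sum_union hdisj]
  have hcard : S1.card + S2.card = L := by
    have := Finset.card_union_of_disjoint hdisj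
    rw [hpart] at this
    simpa using this.symm
  have hS1 : ∑ l ∈ S1, (Finset.univ.filter (fun p : Fin P => shares p l)).card = S1.card := by
    rw [Finset.sum_congr rfl hgood]; simp
  have hS2 : ∑ l ∈ S2, (Finset.univ.filter (fun p : Fin P => shares p l)).card
      ≤ S2.card + ∑ l ∈ S2, (Finset.univ.filter
          (fun p : Fin P => shares p l ∧ head l ≠ p)).card := by
    have step : ∀ l ∈ S2, (Finset.univ.filter (fun p : Fin P => shares p l)).card
        ≤ 1 + (Finset.univ.filter (fun p : Fin P => shares p l ∧ head l ≠ p)).card := by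
      intro l hl
      have hsub : Finset.univ.filter (fun p : Fin P => shares p l)
          ⊆ insert (head l) (Finset.univ.filter (fun p : Fin P => shares p l ∧ head l ≠ p)) := by
        intro p hp
        simp only [Finset.mem_filter, Finset.mem_univ, true_and] at hp
        by_cases h : head l = p
        · simp [h, Finset.mem_insert]
        · simp [Finset.mem_insert, hp, h]
      calc (Finset.univ.filter (fun p : Fin P => shares p l)).card
          ≤ (insert (head l) (Finset.univ.filter
              (fun p : Fin P => shares p l ∧ head l ≠ p))).card := Finset.card_le_card hsub
        _ ≤ 1 + (Finset.univ.filter (fun p : Fin P => shares p l ∧ head l ≠ p)).card := by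
            have := Finset.card_insert_le (head l)
              (Finset.univ.filter (fun p : Fin P => shares p l ∧ head l ≠ p))
            omega
    calc ∑ l ∈ S2, (Finset.univ.filter (fun p : Fin P => shares p l)).card
        ≤ ∑ l ∈ S2, (1 + (Finset.univ.filter
            (fun p : Fin P => shares p l ∧ head l ≠ p)).card) := Finset.sum_le_sum step
      _ = S2.card + ∑ l ∈ S2, (Finset.univ.filter
            (fun p : Fin P => shares p l ∧ head l ≠ p)).card := by
          rw [Finset.sum_add_distrib]; simp
  have htailsum : ∑ l ∈ S2, (Finset.univ.filter
      (fun p : Fin P => shares p l ∧ head l ≠ p)).card ≤ P := by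
    have hsw : ∑ l ∈ S2, (Finset.univ.filter
        (fun p : Fin P => shares p l ∧ head l ≠ p)).card
        = ∑ p : Fin P, (S2.filter (fun l => shares p l ∧ head l ≠ p)).card := by
      simp only [Finset.card_filter]
      exact Finset.sum_comm
    rw [hsw]
    calc ∑ p : Fin P, (S2.filter (fun l => shares p l ∧ head l ≠ p)).card
        ≤ ∑ _p : Fin P, 1 := Finset.sum_le_sum (fun p _ => htail p)
      _ = P := by simp
  calc ∑ l ∈ S1, (Finset.univ.filter (fun p : Fin P => shares p l)).card
        + ∑ l ∈ S2, (Finset.univ.filter (fun p : Fin P => shares p l)).card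
      ≤ S1.card + (S2.card + ∑ l ∈ S2, (Finset.univ.filter
          (fun p : Fin P => shares p l ∧ head l ≠ p)).card) := by
        rw [hS1]; exact Nat.add_le_add_left hS2 _
    _ ≤ S1.card + (S2.card + P) := by
        exact Nat.add_le_add_left (Nat.add_le_add_left htailsum _) _
    _ = L + P := by omega
end

section
/- In the Lite scheme, every slice processed in the second stage is split across at least two processors; equivalently, no second-stage slice is good ('ugly slices do not exist'). -/
/-- In the Lite scheme, every slice processed in the second stage is split
across at least two processors ("ugly slices do not exist"). Setup: `D` is the set of
second-stage elements, `slices` the family of remaining (second-stage) slices, `g p` the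
gap (residual capacity) of processor `p` after the first stage; every remaining slice
exceeds every gap, and the second stage fills each processor at most to its gap. -/
theorem stmt7 (E : Type*) [DecidableEq E] (P : ℕ) (hP : 0 < P)
    (π : E → Fin P) (D : Finset E) (slices : Finset (Finset E)) (g : Fin P → ℕ)
    (hsub : ∀ S ∈ slices, S ⊆ D)
    (hbig : ∀ S ∈ slices, ∀ p : Fin P, g p < S.card)
    (hcap : ∀ p : Fin P, (D.filter (fun e => π e = p)).card ≤ g p) :
    ∀ S ∈ slices, 2 ≤ (S.image π).card := by
  intro S hS
  by_contra h
  push_neg at h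
  interval_cases hc : (S.image π).card
  · have : S = ∅ := by
      by_contra hne
      obtain ⟨e, he⟩ := Finset.nonempty_iff_ne_empty.mpr hne
      have : π e ∈ S.image π := Finset.mem_image_of_mem π he
      simp [Finset.card_eq_zero.mp hc] at this
    have h3 := hbig S hS ⟨0, hP⟩
    rw [this] at h3
    simp at h3
  · obtain ⟨p, hp⟩ := Finset.card_eq_one.mp hc
    have hSsub : S ⊆ D.filter (fun e => π e = p) := by
      intro e he
      refine Finset.mem_filter.mpr ⟨hsub S hS he, ?_⟩
      have : π e ∈ S.image π := Finset.mem_image_of_mem π he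
      rw [hp] at this; simpa using this
    have := Finset.card_le_card hSsub
    have h2 := hcap p
    have h3 := hbig S hS p
    omega
end

section
/- The penultimate-matrix reformulation: for a sparse tensor T with nonzero element set E, the l-th row of the mode-n unfolding of the TTM-chain Z = T ×_1 F_1ᵀ ×···×_{n−1} F_{n−1}ᵀ ×_{n+1} F_{n+1}ᵀ ×···×_N F_Nᵀ equals the sum, over elements e in the mode-n slice with n-th coordinate l, of val(e) times the (vectorized) Kronecker product of the factor-matrix rows indexed by the other N−1 coordinates of e. -/
/-- The full coordinate vector obtained from a mode-`n` index `i` together with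
a mode-`n` fiber index `c` (the remaining `N−1` coordinates). -/
def setCoord {N : ℕ} {L : Fin N → ℕ} (n : Fin N) (i : Fin (L n))
    (c : ∀ j : {j : Fin N // j ≠ n}, Fin (L j.1)) : ∀ j : Fin N, Fin (L j) :=
  fun j => if h : j = n then h.symm ▸ i else c ⟨j, h⟩

section SetCoord

variable {N : ℕ} {L : Fin N → ℕ} (n : Fin N)

lemma setCoord_eq_piSplitAt_symm (i : Fin (L n)) (c : ∀ j : {j : Fin N // j ≠ n}, Fin (L j.1)) :
    setCoord n i c = (Equiv.piSplitAt n (fun j => Fin (L j))).symm (i, c) :=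
  rfl

lemma setCoord_apply_ne (i : Fin (L n)) (c : ∀ j : {j : Fin N // j ≠ n}, Fin (L j.1))
    (j : {j : Fin N // j ≠ n}) : setCoord n i c j.1 = c j := by
  simp [setCoord, j.2]

lemma sum_setCoord {M : Type*} [AddCommMonoid M] (f : (∀ j : Fin N, Fin (L j)) → M)
    (i : Fin (L n)) :
    ∑ c, f (setCoord n i c) = ∑ e with e n = i, f e := by
  rw [Finset.sum_filter,
    ← (Equiv.piSplitAt n (fun j => Fin (L j))).symm.sum_comp, Fintype.sum_prod_type]
  simp [setCoord_eq_piSplitAt_symm]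

end SetCoord

/-- penultimate-matrix reformulation: for a sparse tensor `T` supported on
the finite set `E` of nonzero elements (with values `val`), the `l`-th row of the mode-`n`
unfolding of the TTM-chain `Z = T ×₁ F₁ᵀ ×⋯×_{n−1} F_{n−1}ᵀ ×_{n+1} F_{n+1}ᵀ ×⋯×_N F_Nᵀ`
(columns indexed by `k : Π_{j≠n} Fin (K j)`) equals the sum, over the elements `e` in the
mode-`n` slice with `n`-th coordinate `l`, of `val e` times the (vectorized) Kronecker
product of the factor-matrix rows indexed by the other `N−1` coordinates of `e`. -/
theorem stmt16 {N : ℕ} (L K : Fin N → ℕ) (n : Fin N)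
    (F : ∀ j : Fin N, Matrix (Fin (L j)) (Fin (K j)) ℝ)
    (E : Finset (∀ j : Fin N, Fin (L j))) (val : (∀ j : Fin N, Fin (L j)) → ℝ)
    (T : (∀ j : Fin N, Fin (L j)) → ℝ)
    (hT : ∀ c, T c = if c ∈ E then val c else 0) :
    ∀ (l : Fin (L n)) (k : ∀ j : {j : Fin N // j ≠ n}, Fin (K j.1)),
      -- entry (l, k) of the mode-n unfolding of the TTM-chain Z
      (∑ c : ∀ j : {j : Fin N // j ≠ n}, Fin (L j.1),
          T (setCoord n l c) * ∏ j : {j : Fin N // j ≠ n}, F j.1 (c j) (k j))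
      =
      -- sum of contributions contr_n(e) over the mode-n slice with coordinate l
      ∑ e ∈ E.filter (fun e => e n = l),
          val e * ∏ j : {j : Fin N // j ≠ n}, F j.1 (e j.1) (k j) := by
  intro l k
  calc _ = ∑ c, T (setCoord n l c) * ∏ j : {j : Fin N // j ≠ n},
          F j.1 (setCoord n l c j.1) (k j) := by simp only [setCoord_apply_ne]
    _ = ∑ e with e n = l, T e * ∏ j : {j : Fin N // j ≠ n}, F j.1 (e j.1) (k j) :=
        sum_setCoord n (fun e => T e * ∏ j : {j : Fin N // j ≠ n}, F j.1 (e j.1) (k j)) l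
    _ = _ := by
        simp only [hT, ite_mul, zero_mul]
        rw [Finset.sum_ite_mem, Finset.filter_inter, Finset.univ_inter]
end
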